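/- Separated nodes can be realized simultaneously: let u₁ < u₂ be times such that u₁ is an i-node of order r₁ for x_{1:u₁+r₁}, u₂ is an i-node of order r₂ for x_{1:u₂+r₂}, and u₂ ≥ u₁ + r₁. Then for every n ≥ u₂ + r₂ there exists a Viterbi path v of x_{1:n} with v_{u₁} = i and v_{u₂} = i. -/
import Mathlib


open scoped BigOperators

namespace PMMViterbi

variable {𝒳 𝒴 : Type*} [Fintype 𝒴] [Nonempty 𝒴]

/-- Product of transition weights `∏_{k=t+1}^{n} q(x_k, y_k | x_{k-1}, y_{k-1})`
along the path `y`, for observations `x` (sequences are indexed starting from 1). -/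
noncomputable def prodQ (q : 𝒳 × 𝒴 → 𝒳 × 𝒴 → ℝ) (x : ℕ → 𝒳) (y : ℕ → 𝒴) (t n : ℕ) : ℝ :=
  ∏ k ∈ Finset.Ioc t n, q (x k, y k) (x (k - 1), y (k - 1))

/-- `p(x_{1:n}, y_{1:n}) = p₁(x₁,y₁) · ∏_{k=2}^n q(x_k,y_k|x_{k-1},y_{k-1})`. -/
noncomputable def pJoint (q : 𝒳 × 𝒴 → 𝒳 × 𝒴 → ℝ) (p1 : 𝒳 × 𝒴 → ℝ)
    (x : ℕ → 𝒳) (y : ℕ → 𝒴) (n : ℕ) : ℝ :=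
  p1 (x 1, y 1) * prodQ q x y 1 n

/-- `δ_t(i)`: the maximum of `p(x_{1:t}, y_{1:t})` over paths with `y_t = i`. -/
noncomputable def delta (q : 𝒳 × 𝒴 → 𝒳 × 𝒴 → ℝ) (p1 : 𝒳 × 𝒴 → ℝ)
    (x : ℕ → 𝒳) (t : ℕ) (i : 𝒴) : ℝ :=
  ⨆ (y : ℕ → 𝒴) (_ : y t = i), pJoint q p1 x y t

/-- `p_{ij}(x_{t:n})`: the maximum of `∏_{k=t+1}^n q(x_k,y_k|x_{k-1},y_{k-1})`
over paths with `y_t = i` and `y_n = j`. -/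
noncomputable def pTrans (q : 𝒳 × 𝒴 → 𝒳 × 𝒴 → ℝ) (x : ℕ → 𝒳) (t n : ℕ) (i j : 𝒴) : ℝ :=
  ⨆ (y : ℕ → 𝒴) (_ : y t = i ∧ y n = j), prodQ q x y t n

/-- Time `t` is an `i`-node of order `m - t` for `x_{1:m}`. -/
def IsNode (q : 𝒳 × 𝒴 → 𝒳 × 𝒴 → ℝ) (p1 : 𝒳 × 𝒴 → ℝ)
    (x : ℕ → 𝒳) (t m : ℕ) (i : 𝒴) : Prop :=
  ∀ j k : 𝒴, delta q p1 x t k * pTrans q x t m k j ≤ delta q p1 x t i * pTrans q x t m i j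

/-- Time `t` is a strong `i`-node of order `m - t` for `x_{1:m}`. -/
def IsStrongNode (q : 𝒳 × 𝒴 → 𝒳 × 𝒴 → ℝ) (p1 : 𝒳 × 𝒴 → ℝ)
    (x : ℕ → 𝒳) (t m : ℕ) (i : 𝒴) : Prop :=
  IsNode q p1 x t m i ∧
    ∀ j k : 𝒴, k ≠ i → 0 < delta q p1 x t i * pTrans q x t m i j →
      delta q p1 x t k * pTrans q x t m k j < delta q p1 x t i * pTrans q x t m i j

/-- `v` is a Viterbi path of `x_{1:n}`: it maximizes `y ↦ p(x_{1:n}, y_{1:n})`. -/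
def IsViterbi (q : 𝒳 × 𝒴 → 𝒳 × 𝒴 → ℝ) (p1 : 𝒳 × 𝒴 → ℝ)
    (x : ℕ → 𝒳) (n : ℕ) (v : ℕ → 𝒴) : Prop :=
  ∀ y : ℕ → 𝒴, pJoint q p1 x y n ≤ pJoint q p1 x v n

/-- `v` is an infinite Viterbi path of `x_{1:∞}`: for every `t ≥ 1` there is `m ≥ t`
such that for every `n ≥ m` some Viterbi path of `x_{1:n}` agrees with `v`
on coordinates `1, …, t`. -/
def IsInfViterbi (q : 𝒳 × 𝒴 → 𝒳 × 𝒴 → ℝ) (p1 : 𝒳 × 𝒴 → ℝ)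
    (x : ℕ → 𝒳) (v : ℕ → 𝒴) : Prop :=
  ∀ t : ℕ, 1 ≤ t → ∃ m : ℕ, t ≤ m ∧ ∀ n : ℕ, m ≤ n →
    ∃ w : ℕ → 𝒴, IsViterbi q p1 x n w ∧ ∀ s : ℕ, 1 ≤ s → s ≤ t → w s = v s

section Aux

set_option linter.unusedSectionVars false

variable {q : 𝒳 × 𝒴 → 𝒳 × 𝒴 → ℝ} {p1 : 𝒳 × 𝒴 → ℝ} {x : ℕ → 𝒳}

lemma range_finite_aux {f : (ℕ → 𝒴) → ℝ} (s : Finset ℕ)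
    (h : ∀ y y' : ℕ → 𝒴, (∀ k ∈ s, y k = y' k) → f y = f y') :
    (Set.range f).Finite := by
  classical
  have hsub : Set.range f ⊆ Set.range (fun g : s → 𝒴 =>
      f (fun k => if hk : k ∈ s then g ⟨k, hk⟩ else Classical.arbitrary 𝒴)) := by
    rintro _ ⟨y, rfl⟩
    refine ⟨fun k => y k, ?_⟩
    exact h _ _ (fun k hk => by simp [hk])
  exact (Set.finite_range _).subset hsub

lemma iSup_attained {f : (ℕ → 𝒴) → ℝ} (hfin : (Set.range f).Finite) :
    ∃ y : ℕ → 𝒴, (⨆ z, f z) = f y ∧ ∀ z, f z ≤ f y := by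
  obtain ⟨y, hy⟩ := (Set.range_nonempty f).csSup_mem hfin
  refine ⟨y, by rw [iSup]; exact hy.symm, fun z => ?_⟩
  rw [hy]
  exact le_csSup hfin.bddAbove ⟨z, rfl⟩

lemma ciSup_prop_neg {p : Prop} (h : ¬ p) (a : ℝ) : (⨆ _ : p, a) = 0 := by
  haveI : IsEmpty p := ⟨h⟩
  rw [iSup, Set.range_eq_empty, Real.sSup_empty]

lemma prodQ_nonneg (hq : ∀ z z' : 𝒳 × 𝒴, 0 ≤ q z z') (y : ℕ → 𝒴) (t n : ℕ) :
    0 ≤ prodQ q x y t n :=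
  Finset.prod_nonneg fun _ _ => hq _ _

lemma pJoint_nonneg (hq : ∀ z z' : 𝒳 × 𝒴, 0 ≤ q z z') (hp1 : ∀ z : 𝒳 × 𝒴, 0 ≤ p1 z)
    (y : ℕ → 𝒴) (n : ℕ) : 0 ≤ pJoint q p1 x y n :=
  mul_nonneg (hp1 _) (prodQ_nonneg hq y 1 n)

lemma prodQ_congr {y y' : ℕ → 𝒴} {t n : ℕ}
    (h : ∀ k, t ≤ k → k ≤ n → y k = y' k) : prodQ q x y t n = prodQ q x y' t n := by
  refine Finset.prod_congr rfl fun k hk => ?_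
  rw [Finset.mem_Ioc] at hk
  rw [h k (le_of_lt hk.1) hk.2, h (k - 1) (by omega) (by omega)]

lemma pJoint_congr {y y' : ℕ → 𝒴} {t : ℕ} (ht : 1 ≤ t)
    (h : ∀ k, k ≤ t → y k = y' k) : pJoint q p1 x y t = pJoint q p1 x y' t := by
  unfold pJoint
  rw [h 1 ht, prodQ_congr (fun k _ hk2 => h k hk2)]

lemma prodQ_split {y : ℕ → 𝒴} {t m n : ℕ} (h1 : t ≤ m) (h2 : m ≤ n) :
    prodQ q x y t n = prodQ q x y t m * prodQ q x y m n :=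
  (Finset.prod_Ioc_consecutive _ h1 h2).symm

lemma pJoint_split {y : ℕ → 𝒴} {t n : ℕ} (ht : 1 ≤ t) (h : t ≤ n) :
    pJoint q p1 x y n = pJoint q p1 x y t * prodQ q x y t n := by
  unfold pJoint
  rw [prodQ_split ht h, mul_assoc]

lemma delta_range_finite (t : ℕ) (i : 𝒴) (ht : 1 ≤ t) :
    (Set.range fun y : ℕ → 𝒴 => ⨆ _ : y t = i, pJoint q p1 x y t).Finite := by
  refine range_finite_aux (Finset.Iic t) fun y y' h => ?_
  have hyt : y t = y' t := h t (Finset.mem_Iic.mpr le_rfl)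
  by_cases hp : y t = i
  · rw [ciSup_pos hp, ciSup_pos (hyt ▸ hp)]
    exact pJoint_congr ht fun k hk => h k (Finset.mem_Iic.mpr hk)
  · rw [ciSup_prop_neg hp, ciSup_prop_neg (fun hc => hp (hyt ▸ hc))]

lemma delta_le {y : ℕ → 𝒴} {t : ℕ} {i : 𝒴} (ht : 1 ≤ t) (hyi : y t = i) :
    pJoint q p1 x y t ≤ delta q p1 x t i := by
  have h := le_ciSup (delta_range_finite (q := q) (p1 := p1) (x := x) t i ht).bddAbove y
  rw [ciSup_pos hyi] at h
  exact h

lemma delta_nonneg (hq : ∀ z z' : 𝒳 × 𝒴, 0 ≤ q z z') (hp1 : ∀ z : 𝒳 × 𝒴, 0 ≤ p1 z)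
    {t : ℕ} (i : 𝒴) (ht : 1 ≤ t) : 0 ≤ delta q p1 x t i :=
  le_trans (pJoint_nonneg hq hp1 (fun _ => i) t)
    (delta_le (y := fun _ => i) ht rfl)

lemma delta_attained (hq : ∀ z z' : 𝒳 × 𝒴, 0 ≤ q z z') (hp1 : ∀ z : 𝒳 × 𝒴, 0 ≤ p1 z)
    (t : ℕ) (i : 𝒴) (ht : 1 ≤ t) :
    ∃ y : ℕ → 𝒴, y t = i ∧ pJoint q p1 x y t = delta q p1 x t i := by
  obtain ⟨y, hy, -⟩ := iSup_attained (delta_range_finite (q := q) (p1 := p1) (x := x) t i ht)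
  by_cases hp : y t = i
  · refine ⟨y, hp, ?_⟩
    simp only [delta]
    rw [hy, ciSup_pos hp]
  · refine ⟨fun _ => i, rfl, le_antisymm (delta_le (y := fun _ => i) ht rfl) ?_⟩
    have h0 : delta q p1 x t i = 0 := by
      simp only [delta]
      rw [hy, ciSup_prop_neg hp]
    rw [h0]
    exact pJoint_nonneg hq hp1 _ _

lemma pTrans_range_finite (t n : ℕ) (i j : 𝒴) (h : t ≤ n) :
    (Set.range fun y : ℕ → 𝒴 => ⨆ _ : y t = i ∧ y n = j, prodQ q x y t n).Finite := by
  refine range_finite_aux (Finset.Icc t n) fun y y' hh => ?_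
  have hyt : y t = y' t := hh t (Finset.mem_Icc.mpr ⟨le_rfl, h⟩)
  have hyn : y n = y' n := hh n (Finset.mem_Icc.mpr ⟨h, le_rfl⟩)
  by_cases hp : y t = i ∧ y n = j
  · rw [ciSup_pos hp, ciSup_pos (show y' t = i ∧ y' n = j from ⟨hyt ▸ hp.1, hyn ▸ hp.2⟩)]
    exact prodQ_congr fun k hk1 hk2 => hh k (Finset.mem_Icc.mpr ⟨hk1, hk2⟩)
  · rw [ciSup_prop_neg hp, ciSup_prop_neg (fun hc => hp ⟨hyt ▸ hc.1, hyn ▸ hc.2⟩)]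

lemma pTrans_le {y : ℕ → 𝒴} {t n : ℕ} {i j : 𝒴} (h : t ≤ n)
    (h1 : y t = i) (h2 : y n = j) : prodQ q x y t n ≤ pTrans q x t n i j := by
  have hh := le_ciSup (pTrans_range_finite (q := q) (x := x) t n i j h).bddAbove y
  rw [ciSup_pos (show y t = i ∧ y n = j from ⟨h1, h2⟩)] at hh
  exact hh

lemma pTrans_nonneg (hq : ∀ z z' : 𝒳 × 𝒴, 0 ≤ q z z') {t n : ℕ} (i j : 𝒴) (h : t < n) :
    0 ≤ pTrans q x t n i j := by
  classical
  set y : ℕ → 𝒴 := fun k => if k ≤ t then i else j with hydef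
  have h1 : y t = i := by simp [hydef]
  have h2 : y n = j := by simp [hydef, Nat.not_le.mpr h]
  exact le_trans (prodQ_nonneg hq y t n) (pTrans_le (le_of_lt h) h1 h2)

lemma pTrans_attained (hq : ∀ z z' : 𝒳 × 𝒴, 0 ≤ q z z') (t n : ℕ) (i j : 𝒴) (h : t < n) :
    ∃ y : ℕ → 𝒴, y t = i ∧ y n = j ∧ prodQ q x y t n = pTrans q x t n i j := by
  classical
  obtain ⟨y, hy, -⟩ := iSup_attained (pTrans_range_finite (q := q) (x := x) t n i j (le_of_lt h))
  by_cases hp : y t = i ∧ y n = j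
  · refine ⟨y, hp.1, hp.2, ?_⟩
    simp only [pTrans]
    rw [hy, ciSup_pos hp]
  · set z : ℕ → 𝒴 := fun k => if k ≤ t then i else j with hzdef
    have h1 : z t = i := by simp [hzdef]
    have h2 : z n = j := by simp [hzdef, Nat.not_le.mpr h]
    refine ⟨z, h1, h2, ?_⟩
    have h0 : pTrans q x t n i j = 0 := by
      simp only [pTrans]
      rw [hy, ciSup_prop_neg hp]
    refine le_antisymm ?_ ?_
    · exact pTrans_le (le_of_lt h) h1 h2
    · rw [h0]
      exact prodQ_nonneg hq z t n

noncomputable def glue (t : ℕ) (y z : ℕ → 𝒴) : ℕ → 𝒴 := fun k =>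
  if k ≤ t then y k else z k

lemma glue_left {t k : ℕ} (y z : ℕ → 𝒴) (h : k ≤ t) : glue t y z k = y k := if_pos h

lemma glue_right {t k : ℕ} (y z : ℕ → 𝒴) (h : t < k) : glue t y z k = z k :=
  if_neg (Nat.not_le.mpr h)

lemma glue_pJoint {t : ℕ} (y z : ℕ → 𝒴) (ht : 1 ≤ t) :
    pJoint q p1 x (glue t y z) t = pJoint q p1 x y t :=
  pJoint_congr ht fun k hk => glue_left y z hk

lemma glue_prodQ {t n : ℕ} {y z : ℕ → 𝒴} (hyz : y t = z t) :
    prodQ q x (glue t y z) t n = prodQ q x z t n := by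
  refine prodQ_congr fun k hk1 _ => ?_
  rcases eq_or_lt_of_le hk1 with h | h
  · rw [← h, glue_left y z le_rfl, hyz]
  · exact glue_right y z h

lemma pJoint_le_mul (hq : ∀ z z' : 𝒳 × 𝒴, 0 ≤ q z z') (hp1 : ∀ z : 𝒳 × 𝒴, 0 ≤ p1 z)
    {y : ℕ → 𝒴} {t n : ℕ} (h1 : 1 ≤ t) (h2 : t ≤ n) :
    pJoint q p1 x y n ≤ delta q p1 x t (y t) * pTrans q x t n (y t) (y n) := by
  rw [pJoint_split h1 h2]
  exact mul_le_mul (delta_le h1 rfl) (pTrans_le h2 rfl rfl) (prodQ_nonneg hq y t n)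
    (delta_nonneg hq hp1 _ h1)

lemma node_extend (hq : ∀ z z' : 𝒳 × 𝒴, 0 ≤ q z z') (hp1 : ∀ z : 𝒳 × 𝒴, 0 ≤ p1 z)
    {t m n : ℕ} {i : 𝒴} (h1 : 1 ≤ t) (h2 : t < m) (h3 : m ≤ n)
    (hnode : IsNode q p1 x t m i) : IsNode q p1 x t n i := by
  intro j k
  have htn : t < n := lt_of_lt_of_le h2 h3
  obtain ⟨y, hyt, hyn, hy⟩ := pTrans_attained (q := q) (x := x) hq t n k j htn
  obtain ⟨z, hzt, hzm, hz⟩ := pTrans_attained (q := q) (x := x) hq t m i (y m) h2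
  have hd_i : 0 ≤ delta q p1 x t i := delta_nonneg hq hp1 _ h1
  have hd_k : 0 ≤ delta q p1 x t k := delta_nonneg hq hp1 _ h1
  have hmn : 0 ≤ prodQ q x y m n := prodQ_nonneg hq y m n
  set w := glue m z y with hw
  have hwt : w t = i := by rw [hw, glue_left z y (le_of_lt h2)]; exact hzt
  have hwn : w n = j := by
    rcases eq_or_lt_of_le h3 with h | h
    · rw [hw]
      show glue m z y n = j
      rw [glue_left z y (le_of_eq h.symm), ← h, hzm, h, hyn]
    · rw [hw]
      show glue m z y n = j
      rw [glue_right z y h, hyn]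
  have hwsplit : prodQ q x w t n = prodQ q x z t m * prodQ q x y m n := by
    rw [prodQ_split (le_of_lt h2) h3,
      prodQ_congr (fun a _ ha2 => glue_left z y ha2), glue_prodQ hzm]
  calc delta q p1 x t k * pTrans q x t n k j
      = delta q p1 x t k * prodQ q x y t m * prodQ q x y m n := by
        rw [← hy, prodQ_split (le_of_lt h2) h3, mul_assoc]
    _ ≤ delta q p1 x t k * pTrans q x t m k (y m) * prodQ q x y m n := by
        refine mul_le_mul_of_nonneg_right (mul_le_mul_of_nonneg_left ?_ hd_k) hmn
        exact pTrans_le (le_of_lt h2) hyt rfl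
    _ ≤ delta q p1 x t i * pTrans q x t m i (y m) * prodQ q x y m n :=
        mul_le_mul_of_nonneg_right (hnode (y m) k) hmn
    _ = delta q p1 x t i * prodQ q x w t n := by rw [hwsplit, ← hz, mul_assoc]
    _ ≤ delta q p1 x t i * pTrans q x t n i j :=
        mul_le_mul_of_nonneg_left (pTrans_le (le_of_lt htn) hwt hwn) hd_i

end Aux

/-- separated nodes can be realized simultaneously. If `u₁ < u₂`,
`u₁` is an `i`-node of order `r₁` for `x_{1:u₁+r₁}`, `u₂` is an `i`-node of order `r₂`
for `x_{1:u₂+r₂}`, and `u₂ ≥ u₁ + r₁`, then for every `n ≥ u₂ + r₂` there is a Viterbi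
path `v` of `x_{1:n}` with `v_{u₁} = i` and `v_{u₂} = i`. -/
theorem exists_viterbi_through_separated_nodes (q : 𝒳 × 𝒴 → 𝒳 × 𝒴 → ℝ) (p1 : 𝒳 × 𝒴 → ℝ)
    (hq : ∀ z z' : 𝒳 × 𝒴, 0 ≤ q z z') (hp1 : ∀ z : 𝒳 × 𝒴, 0 ≤ p1 z)
    (x : ℕ → 𝒳) (u₁ u₂ r₁ r₂ : ℕ) (hu₁ : 1 ≤ u₁) (hr₁ : 1 ≤ r₁) (hr₂ : 1 ≤ r₂)
    (hu₁₂ : u₁ < u₂) (hsep : u₁ + r₁ ≤ u₂) (i : 𝒴)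
    (hnode₁ : IsNode q p1 x u₁ (u₁ + r₁) i) (hnode₂ : IsNode q p1 x u₂ (u₂ + r₂) i) :
    ∀ n : ℕ, u₂ + r₂ ≤ n →
      ∃ v : ℕ → 𝒴, IsViterbi q p1 x n v ∧ v u₁ = i ∧ v u₂ = i := by
  intro n hn
  classical
  have hu₂1 : 1 ≤ u₂ := le_trans hu₁ (le_of_lt hu₁₂)
  have h2n : u₂ < n := lt_of_lt_of_le (Nat.lt_add_of_pos_right hr₂) hn
  have hnode₁' : IsNode q p1 x u₁ u₂ i :=
    node_extend hq hp1 hu₁ (Nat.lt_add_of_pos_right hr₁) hsep hnode₁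
  have hnode₂' : IsNode q p1 x u₂ n i :=
    node_extend hq hp1 hu₂1 (Nat.lt_add_of_pos_right hr₂) hn hnode₂
  obtain ⟨js, -, hjs⟩ := Finset.exists_max_image (Finset.univ : Finset 𝒴)
    (fun j => pTrans q x u₂ n i j) Finset.univ_nonempty
  obtain ⟨a, hat, ha⟩ := delta_attained (q := q) (x := x) hq hp1 u₁ i hu₁
  obtain ⟨b, hbt, hbn, hb⟩ := pTrans_attained (q := q) (x := x) hq u₁ u₂ i i hu₁₂
  obtain ⟨c, hct, hcn, hc⟩ := pTrans_attained (q := q) (x := x) hq u₂ n i js h2n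
  have hwu₁ : glue u₁ a b u₁ = i := by rw [glue_left a b le_rfl]; exact hat
  have hwu₂ : glue u₁ a b u₂ = i := by rw [glue_right a b hu₁₂]; exact hbn
  have hvu₁ : glue u₂ (glue u₁ a b) c u₁ = i := by
    rw [glue_left (glue u₁ a b) c (le_of_lt hu₁₂)]; exact hwu₁
  have hvu₂ : glue u₂ (glue u₁ a b) c u₂ = i := by
    rw [glue_left (glue u₁ a b) c le_rfl]; exact hwu₂
  have hwval : pJoint q p1 x (glue u₁ a b) u₂ =
      delta q p1 x u₁ i * pTrans q x u₁ u₂ i i := by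
    rw [pJoint_split hu₁ (le_of_lt hu₁₂), glue_pJoint a b hu₁,
      glue_prodQ (hat.trans hbt.symm), ha, hb]
  have hvval : pJoint q p1 x (glue u₂ (glue u₁ a b) c) n =
      delta q p1 x u₁ i * pTrans q x u₁ u₂ i i * pTrans q x u₂ n i js := by
    rw [pJoint_split hu₂1 (le_of_lt h2n), glue_pJoint (glue u₁ a b) c hu₂1,
      glue_prodQ (hwu₂.trans hct.symm), hwval, hc]
  refine ⟨glue u₂ (glue u₁ a b) c, fun y => ?_, hvu₁, hvu₂⟩
  have hδi : delta q p1 x u₂ i ≤ delta q p1 x u₁ i * pTrans q x u₁ u₂ i i := by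
    obtain ⟨d, hdt, hd⟩ := delta_attained (q := q) (x := x) hq hp1 u₂ i hu₂1
    calc delta q p1 x u₂ i = pJoint q p1 x d u₂ := hd.symm
      _ ≤ delta q p1 x u₁ (d u₁) * pTrans q x u₁ u₂ (d u₁) (d u₂) :=
          pJoint_le_mul hq hp1 hu₁ (le_of_lt hu₁₂)
      _ = delta q p1 x u₁ (d u₁) * pTrans q x u₁ u₂ (d u₁) i := by rw [hdt]
      _ ≤ delta q p1 x u₁ i * pTrans q x u₁ u₂ i i := hnode₁' i (d u₁)
  have hpt : 0 ≤ pTrans q x u₂ n i js := pTrans_nonneg hq i js h2n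
  calc pJoint q p1 x y n
      ≤ delta q p1 x u₂ (y u₂) * pTrans q x u₂ n (y u₂) (y n) :=
        pJoint_le_mul hq hp1 hu₂1 (le_of_lt h2n)
    _ ≤ delta q p1 x u₂ i * pTrans q x u₂ n i (y n) := hnode₂' (y n) (y u₂)
    _ ≤ delta q p1 x u₂ i * pTrans q x u₂ n i js :=
        mul_le_mul_of_nonneg_left (hjs (y n) (Finset.mem_univ _))
          (delta_nonneg hq hp1 i hu₂1)
    _ ≤ delta q p1 x u₁ i * pTrans q x u₁ u₂ i i * pTrans q x u₂ n i js :=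
        mul_le_mul_of_nonneg_right hδi hpt
    _ = pJoint q p1 x (glue u₂ (glue u₁ a b) c) n := hvval.symm

end PMMViterbi
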